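/- arXiv:2601.14494 — 7 statements merged into one kernel-verified Lean document; each statement's English description precedes it below -/
import Mathlib

section
/- If G is a graph on n vertices with minimum degree δ = δ(G), then d_{n−δ−1}(G) = C(n, δ+1) − |{N[v] : deg(v) = δ}|, where the set of closed neighborhoods of minimum-degree vertices is counted without multiplicity. -/
open Finset

/-- The closed neighborhood of a vertex as a `Finset`. -/
def closedNbhd {V : Type*} [Fintype V] [DecidableEq V] (G : SimpleGraph V)
    [DecidableRel G.Adj] (v : V) : Finset V :=
  insert v (G.neighborFinset v)

/-- The number of dominating sets of size `k`. -/
def domCount {V : Type*} [Fintype V] [DecidableEq V] (G : SimpleGraph V)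
    [DecidableRel G.Adj] (k : ℕ) : ℕ :=
  ((univ.powersetCard k).filter (fun S : Finset V => ∀ v : V, ∃ u ∈ S, u ∈ closedNbhd G v)).card

/-!
A set `S` fails to dominate exactly when some closed neighborhood `N[v]` lies in its
complement. Every `N[v]` has at least `δ + 1` elements, so when `|Sᶜ| = δ + 1` this forces
`Sᶜ = N[v]` with `deg v = δ`. Hence taking complements is a bijection between the
non-dominating sets of size `n - δ - 1` and the distinct closed neighborhoods of
minimum-degree vertices, and the dominating ones are the remaining `C(n, δ + 1)` minus these.
-/

section

variable {V : Type*} [Fintype V] [DecidableEq V] (G : SimpleGraph V) [DecidableRel G.Adj]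

lemma card_closedNbhd (v : V) : (closedNbhd G v).card = G.degree v + 1 := by
  rw [closedNbhd, card_insert_of_notMem (by simp), SimpleGraph.card_neighborFinset_eq_degree]

lemma not_dominating_iff_exists_closedNbhd_subset_compl (S : Finset V) :
    ¬ (∀ v, ∃ u ∈ S, u ∈ closedNbhd G v) ↔ ∃ v, closedNbhd G v ⊆ Sᶜ := by
  simp only [not_forall, not_exists, not_and, subset_iff, mem_compl]
  exact exists_congr fun v => ⟨fun h u hu huS => h u huS hu, fun h u huS hu => h hu huS⟩

lemma exists_closedNbhd_subset_iff_mem_image {T : Finset V} (hT : T.card ≤ G.minDegree + 1) :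
    (∃ v, closedNbhd G v ⊆ T) ↔
      T ∈ (univ.filter fun v => G.degree v = G.minDegree).image (closedNbhd G) := by
  simp only [mem_image, mem_filter, mem_univ, true_and]
  constructor
  · rintro ⟨v, hv⟩
    have hδ := G.minDegree_le_degree v
    have hcard := card_le_card hv
    rw [card_closedNbhd] at hcard
    exact ⟨v, by omega, eq_of_subset_of_card_le hv (by rw [card_closedNbhd]; omega)⟩
  · rintro ⟨v, -, rfl⟩
    exact ⟨v, subset_rfl⟩

lemma image_compl_filter_not_dominating :
    ((univ.powersetCard (Fintype.card V - G.minDegree - 1)).filter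
        fun S : Finset V => ¬ ∀ v, ∃ u ∈ S, u ∈ closedNbhd G v).image compl =
      (univ.filter fun v => G.degree v = G.minDegree).image (closedNbhd G) := by
  ext T
  obtain ⟨S, rfl⟩ : ∃ S, T = Sᶜ := ⟨Tᶜ, (compl_compl T).symm⟩
  rw [compl_injective.mem_finset_image, mem_filter, mem_powersetCard,
    not_dominating_iff_exists_closedNbhd_subset_compl]
  have hS := card_compl S
  constructor
  · rintro ⟨⟨-, hcard⟩, h⟩
    exact (exists_closedNbhd_subset_iff_mem_image G (by omega)).1 h
  · intro h
    obtain ⟨v, hv, hT⟩ := mem_image.1 h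
    have hv' : #Sᶜ = G.minDegree + 1 := by rw [← hT, card_closedNbhd, (mem_filter.1 hv).2]
    exact ⟨⟨subset_univ _, by omega⟩,
      (exists_closedNbhd_subset_iff_mem_image G hv'.le).2 h⟩

lemma card_filter_not_dominating :
    ((univ.powersetCard (Fintype.card V - G.minDegree - 1)).filter
        fun S : Finset V => ¬ ∀ v, ∃ u ∈ S, u ∈ closedNbhd G v).card =
      ((univ.filter fun v => G.degree v = G.minDegree).image (closedNbhd G)).card := by
  rw [← image_compl_filter_not_dominating, card_image_of_injective _ compl_injective]

end

/-- `d_{n-δ-1}(G) = C(n, δ+1) - |{N[v] : deg v = δ}|` where the set of closed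
neighborhoods of minimum-degree vertices is counted without multiplicity. -/
theorem domCount_top_deltaPlusOne {V : Type*} [Fintype V] [DecidableEq V] [Nonempty V]
    (G : SimpleGraph V) [DecidableRel G.Adj] :
    domCount G (Fintype.card V - G.minDegree - 1)
      = (Fintype.card V).choose (G.minDegree + 1)
        - ((univ.filter (fun v : V => G.degree v = G.minDegree)).image (closedNbhd G)).card := by
  have hsplit := card_filter_add_card_filter_not
    (s := univ.powersetCard (Fintype.card V - G.minDegree - 1))
    (fun S : Finset V => ∀ v, ∃ u ∈ S, u ∈ closedNbhd G v)
  rw [card_filter_not_dominating, card_powersetCard, card_univ, Nat.sub_sub,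
    Nat.choose_symm G.minDegree_lt_card] at hsplit
  rw [domCount, ← hsplit, Nat.sub_sub, Nat.add_sub_cancel]
end

section
/- Let n, m, k be integers with 1 ≤ m ≤ n and k = ⌊n/2⌋. Then C(n−m, k) / C(n, k) ≤ 2^{1−m}. Equivalently, C(n−m,k)·2^{m−1} ≤ C(n,k). -/
/-!
Pascal's rule gives `C(b+1, k) = C(b, k-1) + C(b, k)`, and below the middle (`b < 2k`) the
first summand dominates the second, so `C(b+1, k) ≥ 2 C(b, k)`. Adding the `m - 1` elements
`n - m + 1, …, n - 1` one at a time stays below the middle, because `n - 1 ≤ 2 ⌊n/2⌋`; hence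
`C(n-m, ⌊n/2⌋) · 2^(m-1) ≤ C(n-1, ⌊n/2⌋) ≤ C(n, ⌊n/2⌋)`.
-/

namespace Nat

lemma choose_succ_le_choose_of_le {b k : ℕ} (h : b ≤ 2 * k + 1) :
    b.choose (k + 1) ≤ b.choose k := by
  refine Nat.le_of_mul_le_mul_right ?_ k.succ_pos
  calc b.choose (k + 1) * (k + 1) = b.choose k * (b - k) := choose_succ_right_eq b k
    _ ≤ b.choose k * (k + 1) := Nat.mul_le_mul_left _ (by omega)

lemma two_mul_choose_le_choose_succ {b k : ℕ} (h : b < 2 * k) :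
    2 * b.choose k ≤ (b + 1).choose k := by
  obtain ⟨c, rfl⟩ : ∃ c, k = c + 1 := Nat.exists_eq_add_one.mpr (by omega)
  have := choose_succ_le_choose_of_le (b := b) (k := c) (by omega)
  rw [choose_succ_succ']
  omega

lemma choose_mul_two_pow_le_choose_add {a j k : ℕ} (h : a + j ≤ 2 * k) :
    a.choose k * 2 ^ j ≤ (a + j).choose k := by
  induction j with
  | zero => simp
  | succ j ih =>
    calc a.choose k * 2 ^ (j + 1) = 2 * (a.choose k * 2 ^ j) := by ring
      _ ≤ 2 * (a + j).choose k := Nat.mul_le_mul_left 2 (ih (by omega))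
      _ ≤ (a + j + 1).choose k := two_mul_choose_le_choose_succ (by omega)

end Nat

theorem choose_ratio_bound_general (n m : ℕ) (hmn : m ≤ n) :
    (n - m).choose (n / 2) * 2 ^ (m - 1) ≤ n.choose (n / 2) := by
  rcases m with _ | j
  · simp
  · calc (n - (j + 1)).choose (n / 2) * 2 ^ (j + 1 - 1)
        ≤ (n - (j + 1) + j).choose (n / 2) :=
          Nat.choose_mul_two_pow_le_choose_add (by omega)
      _ ≤ n.choose (n / 2) := Nat.choose_le_choose _ (by omega)

/-- `C(n-m, ⌊n/2⌋) ≤ 2^{1-m} · C(n, ⌊n/2⌋)` for `1 ≤ m ≤ n`, stated in the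
equivalent multiplied form `C(n-m, ⌊n/2⌋) · 2^{m-1} ≤ C(n, ⌊n/2⌋)`. -/
theorem choose_ratio_bound (n m : ℕ) (hm : 1 ≤ m) (hmn : m ≤ n) :
    (n - m).choose (n / 2) * 2 ^ (m - 1) ≤ n.choose (n / 2) :=
  choose_ratio_bound_general n m hmn
end

section
/- Let G be a graph on n ≥ 4 vertices. If δ(G) ≥ log₂(n(n+2)) − 2, equivalently 2^{δ(G)+2} ≥ n(n+2), then the domination sequence of G is unimodal with mode ⌈n/2⌉. -/
open Finset

/-! ### Auxiliary binomial lemmas -/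

private lemma choose_succ_le_aux (m s : ℕ) (h : m ≤ 2 * s + 1) :
    m.choose (s + 1) ≤ m.choose s := by
  have h1 := Nat.choose_succ_right_eq m s
  have h2 : m.choose (s + 1) * (s + 1) ≤ m.choose s * (s + 1) := by
    rw [h1]
    exact Nat.mul_le_mul_left _ (by omega)
  exact Nat.le_of_mul_le_mul_right h2 (Nat.succ_pos s)

private lemma two_mul_choose_le_aux {a j : ℕ} (hj : 1 ≤ j) (h : a ≤ 2 * j) :
    2 * (a - 1).choose j ≤ a.choose j := by
  cases a with
  | zero =>
      simp [Nat.choose_eq_zero_of_lt hj]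
  | succ b =>
      obtain ⟨t, rfl⟩ : ∃ t, j = t + 1 := ⟨j - 1, by omega⟩
      have hp : (b + 1).choose (t + 1) = b.choose t + b.choose (t + 1) :=
        Nat.choose_succ_succ b t
      have hd := choose_succ_le_aux b t (by omega)
      simp only [Nat.succ_sub_one]
      omega

private lemma pow_mul_choose_le_aux {n j : ℕ} (hj : 1 ≤ j) (h : n ≤ 2 * j) :
    ∀ m : ℕ, 2 ^ m * (n - m).choose j ≤ n.choose j := by
  intro m
  induction m with
  | zero => simp
  | succ m ih =>
      have h1 : 2 * ((n - m) - 1).choose j ≤ (n - m).choose j :=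
        two_mul_choose_le_aux hj (by omega)
      have h2 : n - (m + 1) = (n - m) - 1 := by omega
      calc 2 ^ (m + 1) * (n - (m + 1)).choose j
          = 2 ^ m * (2 * ((n - m) - 1).choose j) := by rw [h2]; ring
        _ ≤ 2 ^ m * (n - m).choose j := Nat.mul_le_mul_left _ h1
        _ ≤ n.choose j := ih

private lemma mul_choose_anti_aux {n j : ℕ} (hj : 1 ≤ j) (h : n ≤ 2 * j)
    {a b : ℕ} (ha : 1 ≤ a) (hab : a ≤ b) :
    b * (n - b).choose j ≤ a * (n - a).choose j := by
  induction b, hab using Nat.le_induction with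
  | base => exact le_refl _
  | succ b hb ih =>
      have h1 : 2 * ((n - b) - 1).choose j ≤ (n - b).choose j :=
        two_mul_choose_le_aux hj (by omega)
      have h3 : (b + 1) * (n - (b + 1)).choose j ≤ b * (n - b).choose j := by
        have h2 : n - (b + 1) = (n - b) - 1 := by omega
        calc (b + 1) * (n - (b + 1)).choose j
            ≤ 2 * b * ((n - b) - 1).choose j := by
              rw [h2]; exact Nat.mul_le_mul_right _ (by omega)
          _ = b * (2 * ((n - b) - 1).choose j) := by ring
          _ ≤ b * (n - b).choose j := Nat.mul_le_mul_left _ h1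
      exact h3.trans ih

/-! ### Dominating set counting lemmas -/

section Dom

variable {V : Type*} [Fintype V] [DecidableEq V] (G : SimpleGraph V) [DecidableRel G.Adj]

/-- The domination predicate. -/
private abbrev DomP (S : Finset V) : Prop := ∀ v : V, ∃ u ∈ S, u ∈ closedNbhd G v

private lemma domCount_eq (k : ℕ) :
    domCount G k = ((univ.powersetCard k).filter (fun S => DomP G S)).card := rfl

private lemma not_domP_iff {S : Finset V} :
    ¬ DomP G S ↔ ∃ u : V, ∀ w ∈ S, w ∉ closedNbhd G u := by
  constructor
  · intro h
    by_contra hc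
    push_neg at hc
    exact h (fun v => by
      obtain ⟨w, hw1, hw2⟩ := hc v
      exact ⟨w, hw1, hw2⟩)
  · rintro ⟨u, hu⟩ h
    obtain ⟨w, hw1, hw2⟩ := h u
    exact hu w hw1 hw2

private lemma dom_mono {S T : Finset V} (hST : S ⊆ T) (hS : DomP G S) : DomP G T := by
  intro v
  obtain ⟨u, hu, hu'⟩ := hS v
  exact ⟨u, hST hu, hu'⟩

private lemma minDegree_succ_le_card_closedNbhd (u : V) :
    G.minDegree + 1 ≤ (closedNbhd G u).card := by
  rw [closedNbhd, card_insert_of_notMem (SimpleGraph.notMem_neighborFinset_self G u),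
    SimpleGraph.card_neighborFinset_eq_degree]
  exact Nat.add_le_add_right (G.minDegree_le_degree u) 1

/-- Double counting on the increasing side. -/
private lemma domCount_mul_le (i : ℕ) :
    domCount G i * (Fintype.card V - i) ≤ domCount G (i + 1) * (i + 1) := by
  rw [domCount_eq, domCount_eq]
  refine Finset.card_mul_le_card_mul (· ⊆ ·) ?_ ?_
  · intro S hS
    rw [mem_filter, mem_powersetCard] at hS
    obtain ⟨⟨-, hcard⟩, hdom⟩ := hS
    have hinj : (univ \ S).card ≤
        ((Finset.bipartiteAbove (· ⊆ ·)
          ((univ.powersetCard (i + 1)).filter (fun S => DomP G S)) S)).card := by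
      apply Finset.card_le_card_of_injOn (fun v => insert v S)
      · intro v hv
        rw [mem_coe, mem_sdiff] at hv
        rw [mem_coe, Finset.bipartiteAbove, mem_filter, mem_filter, mem_powersetCard]
        refine ⟨⟨⟨subset_univ _, ?_⟩, ?_⟩, subset_insert _ _⟩
        · rw [card_insert_of_notMem hv.2, hcard]
        · exact dom_mono G (subset_insert _ _) hdom
      · intro a ha b hb hab
        rw [coe_sdiff, Set.mem_diff] at ha hb
        have hab' : insert a S = insert b S := hab
        have h1 : a ∈ insert b S := hab' ▸ mem_insert_self a S
        rcases mem_insert.1 h1 with h | h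
        · exact h
        · exact absurd h ha.2
    calc Fintype.card V - i = (univ \ S).card := by
          rw [card_sdiff_of_subset (subset_univ S), card_univ, hcard]
      _ ≤ _ := hinj
  · intro T hT
    rw [mem_filter, mem_powersetCard] at hT
    calc (Finset.bipartiteBelow (· ⊆ ·) _ T).card ≤ (T.powersetCard i).card := by
          apply card_le_card
          intro S hS
          rw [Finset.bipartiteBelow, mem_filter, mem_filter, mem_powersetCard] at hS
          rw [mem_powersetCard]
          exact ⟨hS.2, hS.1.1.2⟩
      _ = (i + 1).choose i := by rw [card_powersetCard, hT.1.2]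
      _ = i + 1 := Nat.choose_succ_self_right i

private lemma domCount_le_succ (i : ℕ) (h : 2 * i + 1 ≤ Fintype.card V) :
    domCount G i ≤ domCount G (i + 1) := by
  have key := domCount_mul_le G i
  have h1 : i + 1 ≤ Fintype.card V - i := by omega
  have h2 : domCount G (i + 1) * (i + 1) ≤ domCount G (i + 1) * (Fintype.card V - i) :=
    Nat.mul_le_mul_left _ h1
  exact Nat.le_of_mul_le_mul_right (key.trans h2) (by omega)

/-- The main counting inequality on the decreasing side. -/
private lemma domCount_succ_mul_le (j : ℕ) (hj1 : 1 ≤ j)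
    (hj : Fintype.card V ≤ 2 * j) :
    domCount G (j + 1) * (j + 1) ≤
      domCount G j * (Fintype.card V - j) +
        Fintype.card V * ((G.minDegree + 1) *
          (Fintype.card V - (G.minDegree + 1)).choose j) := by
  set n := Fintype.card V with hn
  set δ := G.minDegree with hδdef
  set D1 : Finset (Finset V) := (univ.powersetCard (j + 1)).filter (fun S => DomP G S)
    with hD1
  set D0 : Finset (Finset V) := (univ.powersetCard j).filter (fun S => DomP G S) with hD0
  have hmemD1 : ∀ {T : Finset V}, T ∈ D1 ↔ T.card = j + 1 ∧ DomP G T := by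
    intro T
    rw [hD1, mem_filter, mem_powersetCard]
    exact ⟨fun h => ⟨h.1.2, h.2⟩, fun h => ⟨⟨subset_univ _, h.1⟩, h.2⟩⟩
  have hmemD0 : ∀ {S : Finset V}, S ∈ D0 ↔ S.card = j ∧ DomP G S := by
    intro S
    rw [hD0, mem_filter, mem_powersetCard]
    exact ⟨fun h => ⟨h.1.2, h.2⟩, fun h => ⟨⟨subset_univ _, h.1⟩, h.2⟩⟩
  -- the incidence set
  set Z : Finset ((_ : Finset V) × V) := D1.sigma (fun T => T) with hZ
  have hmemZ : ∀ {p : (_ : Finset V) × V}, p ∈ Z ↔ p.1 ∈ D1 ∧ p.2 ∈ p.1 := by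
    intro p
    rw [hZ, mem_sigma]
  have hcardZ : Z.card = domCount G (j + 1) * (j + 1) := by
    rw [hZ, Finset.card_sigma, domCount_eq]
    rw [Finset.sum_congr rfl (fun T hT => (hmemD1.1 hT).1)]
    rw [Finset.sum_const, smul_eq_mul]
  set X : Finset ((_ : Finset V) × V) := Z.filter (fun p => DomP G (p.1.erase p.2))
    with hX
  set X' : Finset ((_ : Finset V) × V) := Z.filter (fun p => ¬ DomP G (p.1.erase p.2))
    with hX'
  have hsplit : X.card + X'.card = Z.card := by
    rw [hX, hX']
    exact Finset.card_filter_add_card_filter_not _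
  -- bound on X
  have hXbound : X.card ≤ domCount G j * (n - j) := by
    have htarget : (D0.sigma (fun S => univ \ S)).card = domCount G j * (n - j) := by
      rw [Finset.card_sigma, domCount_eq]
      rw [Finset.sum_congr rfl (fun S hS => by
        rw [card_sdiff_of_subset (subset_univ S), card_univ, (hmemD0.1 hS).1])]
      rw [Finset.sum_const, smul_eq_mul]
    rw [← htarget]
    apply Finset.card_le_card_of_injOn
      (fun p : (_ : Finset V) × V => (⟨p.1.erase p.2, p.2⟩ : (_ : Finset V) × V))
    · intro p hp
      rw [hX, mem_coe, mem_filter] at hp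
      obtain ⟨hpZ, hdom⟩ := hp
      obtain ⟨hT, hv⟩ := hmemZ.1 hpZ
      have hgoal : (⟨p.1.erase p.2, p.2⟩ : (_ : Finset V) × V) ∈
          D0.sigma (fun S => univ \ S) := by
        rw [mem_sigma]
        constructor
        · rw [hmemD0]
          refine ⟨?_, hdom⟩
          rw [card_erase_of_mem hv, (hmemD1.1 hT).1]
          omega
        · rw [mem_sdiff]
          exact ⟨mem_univ _, notMem_erase _ _⟩
      exact hgoal
    · intro p hp q hq hfe
      simp only [Finset.mem_coe, hX, mem_filter] at hp hq
      obtain ⟨hTp, hvp⟩ := hmemZ.1 hp.1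
      obtain ⟨hTq, hvq⟩ := hmemZ.1 hq.1
      have h1 : p.1.erase p.2 = q.1.erase q.2 := congrArg (fun x => x.1) hfe
      have h2 : p.2 = q.2 := congrArg (fun x => x.2) hfe
      have hfst : p.1 = q.1 := by
        rw [← insert_erase hvp, h1, h2, insert_erase hvq]
      exact Sigma.ext hfst (heq_of_eq h2)
  -- bound on X'
  set W : Finset ((_ : V) × (_ : V) × Finset V) :=
    univ.sigma (fun u => (closedNbhd G u).sigma
      (fun _ => ((closedNbhd G u)ᶜ).powersetCard j)) with hW
  have hXW : X'.card ≤ W.card := by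
    apply Finset.card_le_card_of_injOn (fun p : (_ : Finset V) × V =>
      if h : ∃ u : V, ∀ w ∈ p.1.erase p.2, w ∉ closedNbhd G u
      then (⟨h.choose, p.2, p.1.erase p.2⟩ : (_ : V) × (_ : V) × Finset V)
      else ⟨p.2, p.2, p.1.erase p.2⟩)
    · intro p hp
      rw [hX', mem_coe, mem_filter] at hp
      obtain ⟨hpZ, hndom⟩ := hp
      obtain ⟨hT, hv⟩ := hmemZ.1 hpZ
      have hex : ∃ u : V, ∀ w ∈ p.1.erase p.2, w ∉ closedNbhd G u :=
        (not_domP_iff G).1 hndom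
      have hgoal : (⟨hex.choose, p.2, p.1.erase p.2⟩ : (_ : V) × (_ : V) × Finset V)
          ∈ W := by
        have huprop := hex.choose_spec
        simp only [hW, mem_sigma]
        have hTdom : DomP G p.1 := (hmemD1.1 hT).2
        obtain ⟨w, hwT, hwN⟩ := hTdom hex.choose
        have hwv : w = p.2 := by
          by_contra hne
          exact huprop w (mem_erase.2 ⟨hne, hwT⟩) hwN
        subst hwv
        refine ⟨mem_univ _, hwN, ?_⟩
        rw [mem_powersetCard]
        constructor
        · intro x hx
          rw [mem_compl]
          exact huprop x hx
        · rw [card_erase_of_mem hwT, (hmemD1.1 hT).1]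
          omega
      simpa only [dif_pos hex, mem_coe] using hgoal
    · intro p hp q hq hfe
      simp only [Finset.mem_coe, hX', mem_filter] at hp hq
      obtain ⟨hTp, hvp⟩ := hmemZ.1 hp.1
      obtain ⟨hTq, hvq⟩ := hmemZ.1 hq.1
      have hexp : ∃ u : V, ∀ w ∈ p.1.erase p.2, w ∉ closedNbhd G u :=
        (not_domP_iff G).1 hp.2
      have hexq : ∃ u : V, ∀ w ∈ q.1.erase q.2, w ∉ closedNbhd G u :=
        (not_domP_iff G).1 hq.2
      simp only [dif_pos hexp, dif_pos hexq] at hfe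
      have h1 : p.1.erase p.2 = q.1.erase q.2 := congrArg (fun x => x.2.2) hfe
      have h2 : p.2 = q.2 := congrArg (fun x => x.2.1) hfe
      have hfst : p.1 = q.1 := by
        rw [← insert_erase hvp, h1, h2, insert_erase hvq]
      exact Sigma.ext hfst (heq_of_eq h2)
  have hWcard : W.card ≤ n * ((δ + 1) * (n - (δ + 1)).choose j) := by
    rw [hW, Finset.card_sigma]
    have hterm : ∀ u : V,
        ((closedNbhd G u).sigma
          (fun _ => ((closedNbhd G u)ᶜ).powersetCard j)).card ≤
          (δ + 1) * (n - (δ + 1)).choose j := by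
      intro u
      rw [Finset.card_sigma]
      have hcc : ((closedNbhd G u)ᶜ).card = n - (closedNbhd G u).card := by
        rw [card_compl, hn]
      rw [Finset.sum_congr rfl (fun v _ => by rw [card_powersetCard, hcc])]
      rw [Finset.sum_const, smul_eq_mul]
      exact mul_choose_anti_aux hj1 hj (Nat.le_add_left 1 δ)
        (minDegree_succ_le_card_closedNbhd G u)
    calc ∑ u : V, ((closedNbhd G u).sigma
          (fun _ => ((closedNbhd G u)ᶜ).powersetCard j)).card
        ≤ ∑ _u : V, (δ + 1) * (n - (δ + 1)).choose j :=
          Finset.sum_le_sum (fun u _ => hterm u)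
      _ = n * ((δ + 1) * (n - (δ + 1)).choose j) := by
          rw [Finset.sum_const, card_univ, smul_eq_mul]
  calc domCount G (j + 1) * (j + 1) = Z.card := hcardZ.symm
    _ = X.card + X'.card := hsplit.symm
    _ ≤ domCount G j * (n - j) + W.card := Nat.add_le_add hXbound hXW
    _ ≤ domCount G j * (n - j) + n * ((δ + 1) * (n - (δ + 1)).choose j) :=
        Nat.add_le_add_left hWcard _

/-- Lower bound on the number of dominating sets. -/
private lemma choose_le_domCount_add (j : ℕ) (hpos : 0 < Fintype.card V) :
    (Fintype.card V).choose j ≤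
      domCount G j + Fintype.card V * (Fintype.card V - (G.minDegree + 1)).choose j := by
  set n := Fintype.card V with hn
  set δ := G.minDegree with hδdef
  have hsplit : domCount G j +
      ((univ.powersetCard j).filter (fun S => ¬ DomP G S)).card = n.choose j := by
    rw [domCount_eq, Finset.card_filter_add_card_filter_not,
      card_powersetCard, card_univ]
  have hbound : ((univ.powersetCard j).filter (fun S => ¬ DomP G S)).card ≤
      n * (n - (δ + 1)).choose j := by
    set W : Finset ((_ : V) × Finset V) :=
      univ.sigma (fun u => ((closedNbhd G u)ᶜ).powersetCard j) with hW
    haveI hne : Nonempty V := Fintype.card_pos_iff.mp hpos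
    have hXW : ((univ.powersetCard j).filter (fun S => ¬ DomP G S)).card ≤ W.card := by
      apply Finset.card_le_card_of_injOn (fun S =>
        if h : ∃ u : V, ∀ w ∈ S, w ∉ closedNbhd G u
        then (⟨h.choose, S⟩ : (_ : V) × Finset V)
        else ⟨Classical.arbitrary V, S⟩)
      · intro S hS
        rw [mem_coe, mem_filter, mem_powersetCard] at hS
        obtain ⟨⟨-, hcard⟩, hndom⟩ := hS
        have hex : ∃ u : V, ∀ w ∈ S, w ∉ closedNbhd G u := (not_domP_iff G).1 hndom
        have hgoal : (⟨hex.choose, S⟩ : (_ : V) × Finset V) ∈ W := by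
          rw [hW, mem_sigma, mem_powersetCard]
          refine ⟨mem_univ _, ?_, hcard⟩
          intro x hx
          rw [mem_compl]
          exact hex.choose_spec x hx
        simpa only [dif_pos hex, mem_coe] using hgoal
      · intro S hS S' hS' hfe
        by_cases h : ∃ u : V, ∀ w ∈ S, w ∉ closedNbhd G u <;>
          by_cases h' : ∃ u : V, ∀ w ∈ S', w ∉ closedNbhd G u
        · simp only [dif_pos h, dif_pos h'] at hfe
          exact congrArg (fun x => x.2) hfe
        · simp only [dif_pos h, dif_neg h'] at hfe
          exact congrArg (fun x => x.2) hfe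
        · simp only [dif_neg h, dif_pos h'] at hfe
          exact congrArg (fun x => x.2) hfe
        · simp only [dif_neg h, dif_neg h'] at hfe
          exact congrArg (fun x => x.2) hfe
    have hWcard : W.card ≤ n * (n - (δ + 1)).choose j := by
      rw [hW, Finset.card_sigma]
      have hterm : ∀ u : V,
          (((closedNbhd G u)ᶜ).powersetCard j).card ≤ (n - (δ + 1)).choose j := by
        intro u
        rw [card_powersetCard, card_compl]
        exact Nat.choose_le_choose j (by
          have := minDegree_succ_le_card_closedNbhd G u
          omega)
      calc ∑ u : V, (((closedNbhd G u)ᶜ).powersetCard j).card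
          ≤ ∑ _u : V, (n - (δ + 1)).choose j := Finset.sum_le_sum (fun u _ => hterm u)
        _ = n * (n - (δ + 1)).choose j := by rw [Finset.sum_const, card_univ, smul_eq_mul]
    exact hXW.trans hWcard
  omega

/-- Descent step on the decreasing side. -/
private lemma domCount_succ_le (j : ℕ) (hj1 : 1 ≤ j) (hj : Fintype.card V ≤ 2 * j)
    (hpos : 0 < Fintype.card V)
    (hδ : Fintype.card V * (Fintype.card V + 2) ≤ 2 ^ (G.minDegree + 2)) :
    domCount G (j + 1) ≤ domCount G j := by
  set n := Fintype.card V with hn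
  set δ := G.minDegree with hδdef
  set D := (n - (δ + 1)).choose j with hD
  -- key binomial inequality : n * (δ + 2) * D ≤ choose n j
  have hkey : n * (δ + 2) * D ≤ n.choose j := by
    rcases Nat.lt_or_ge (n - (δ + 1)) j with hc | hc
    · rw [hD, Nat.choose_eq_zero_of_lt hc, mul_zero]
      exact Nat.zero_le _
    · -- here δ + 1 + j ≤ n, hence 2 * (δ + 1) ≤ n
      have h2 : 2 * (δ + 1) ≤ n := by omega
      have h3 : n * (δ + 2) ≤ 2 ^ (δ + 1) := by
        have h4 : 2 * (n * (δ + 2)) ≤ 2 * 2 ^ (δ + 1) := by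
          calc 2 * (n * (δ + 2)) = n * (2 * (δ + 2)) := by ring
            _ ≤ n * (n + 2) := Nat.mul_le_mul_left _ (by omega)
            _ ≤ 2 ^ (δ + 2) := hδ
            _ = 2 * 2 ^ (δ + 1) := by ring
        omega
      calc n * (δ + 2) * D ≤ 2 ^ (δ + 1) * D := Nat.mul_le_mul_right _ h3
        _ ≤ n.choose j := pow_mul_choose_le_aux hj1 hj (δ + 1)
  have hlow := choose_le_domCount_add G j (by omega)
  have hmain := domCount_succ_mul_le G j hj1 hj
  rw [← hn, ← hδdef, ← hD] at hlow hmain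
  -- from hkey and hlow : n * (δ + 1) * D ≤ domCount G j
  have hsplit : n * (δ + 2) * D = n * ((δ + 1) * D) + n * D := by ring
  have hlow2 : n * ((δ + 1) * D) ≤ domCount G j := by omega
  -- combine
  have hfin : domCount G (j + 1) * (j + 1) ≤ domCount G j * (j + 1) := by
    calc domCount G (j + 1) * (j + 1)
        ≤ domCount G j * (n - j) + n * ((δ + 1) * D) := hmain
      _ ≤ domCount G j * (n - j) + domCount G j := Nat.add_le_add_left hlow2 _
      _ = domCount G j * ((n - j) + 1) := by ring
      _ ≤ domCount G j * (j + 1) := Nat.mul_le_mul_left _ (by omega)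
  exact Nat.le_of_mul_le_mul_right hfin (Nat.succ_pos j)

end Dom

/-- If `n ≥ 4` and `δ(G) ≥ log₂(n(n+2)) - 2`, i.e. `2^{δ(G)+2} ≥ n(n+2)`, then the
domination sequence of `G` is unimodal with mode `⌈n/2⌉`. -/
theorem minDegree_log_unimodal {V : Type*} [Fintype V] [DecidableEq V]
    (G : SimpleGraph V) [DecidableRel G.Adj]
    (hn : 4 ≤ Fintype.card V)
    (hδ : Fintype.card V * (Fintype.card V + 2) ≤ 2 ^ (G.minDegree + 2)) :
    letI k : ℕ := (Fintype.card V + 1) / 2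
    (∀ i j : ℕ, i ≤ j → j ≤ k → domCount G i ≤ domCount G j)
    ∧ (∀ i j : ℕ, k ≤ i → i ≤ j → domCount G j ≤ domCount G i) := by
  refine ⟨?_, ?_⟩
  · intro i j hij hjk
    induction j, hij using Nat.le_induction with
    | base => exact le_refl _
    | succ j hij ih =>
        refine (ih (by omega)).trans ?_
        apply domCount_le_succ
        have : j + 1 ≤ (Fintype.card V + 1) / 2 := hjk
        omega
  · intro i j hki hij
    induction j, hij using Nat.le_induction with
    | base => exact le_refl _
    | succ j hij ih =>
        refine (domCount_succ_le G j ?_ ?_ (by omega) hδ).trans ih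
        · have : (Fintype.card V + 1) / 2 ≤ j := le_trans hki hij
          omega
        · have : (Fintype.card V + 1) / 2 ≤ j := le_trans hki hij
          omega
end

section
/- Let V be a finite set of size n and let (A_v)_{v∈V} be a family of finite sets indexed by V. For every tree T on vertex set V, |⋃_{v∈V} A_v| ≤ Σ_{v∈V} |A_v| − Σ_{uv ∈ E(T)} |A_u ∩ A_v|. -/
open Finset

open SimpleGraph Walk in
lemma tree_edges_in_set {V : Type*} [Fintype V] [DecidableEq V] {T : SimpleGraph V}
    [DecidableRel T.Adj] (hT : T.Connected) (hT' : T.IsAcyclic) (S : Finset V) {r : V}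
    (hr : r ∈ S) :
    (T.edgeFinset.filter (fun e => ∀ x ∈ e, x ∈ S)).card + 1 ≤ S.card := by
  classical
  have hG : T.IsTree := ⟨hT, hT'⟩
  choose f hf hf' using (hG.existsUnique_path · r)
  have surj : ∀ x y, T.Adj x y →
      ∃ w, w ≠ r ∧ ∃ hn : ¬ (f w).Nil, ((f w).firstDart hn).edge = s(x, y) := by
    intro x y h
    wlog h' : (f x).length ≤ (f y).length generalizing x y
    · obtain ⟨w, hw, hn, he⟩ := this y x h.symm (le_of_not_ge h')
      exact ⟨w, hw, hn, by rw [he, Sym2.eq_swap]⟩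
    have hyr : y ≠ r := by
      rintro rfl
      rw [← hf' _ nil IsPath.nil, length_nil,
          ← hf' _ (.cons h .nil) (IsPath.nil.cons <| by simpa using h.ne),
          length_cons, length_nil] at h'
      simp [Nat.le_zero, Nat.one_ne_zero] at h'
    refine ⟨y, hyr, not_nil_of_ne hyr, dart_edge_eq_mk'_iff.2 <| Or.inr ?_⟩
    rw [← hf' _ (.cons h.symm (f x)) ((cons_isPath_iff _ _).2 ⟨hf _, fun hy => ?contra⟩)]
    · simp only [firstDart_toProd, getVert_cons_succ, getVert_zero, Prod.swap_prod_mk]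
    case contra =>
      suffices (f x).takeUntil y hy = .cons h .nil by
        rw [← take_spec _ hy] at h'
        simp [this, hf' _ _ ((hf _).dropUntil hy)] at h'
      refine (hG.existsUnique_path _ _).unique ((hf _).takeUntil _) ?_
      simp [h.ne]
  set Es := T.edgeFinset.filter (fun e => ∀ x ∈ e, x ∈ S) with hEs
  have h1 : ∀ e ∈ Es, ∃ w ∈ S.erase r, ∃ hn : ¬ (f w).Nil, ((f w).firstDart hn).edge = e := by
    intro e he
    rw [hEs, Finset.mem_filter, mem_edgeFinset] at he
    obtain ⟨he1, he2⟩ := he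
    obtain ⟨⟨x, y⟩, rfl⟩ := e.exists_rep
    obtain ⟨w, hwr, hn, hedge⟩ := surj x y (T.mem_edgeSet.1 he1)
    have hwmem : w ∈ s(x, y) := by
      rw [← hedge, edge_firstDart]
      exact Sym2.mem_mk_left _ _
    exact ⟨w, Finset.mem_erase.2 ⟨hwr, he2 w hwmem⟩, hn, hedge⟩
  choose g hg hgn hge using h1
  have hinj : Es.card ≤ (S.erase r).card := by
    rw [← Finset.card_attach]
    apply Finset.card_le_card_of_injOn (fun p => g p.1 p.2)
    · exact fun p _ => hg p.1 p.2
    · intro p _ q _ hpq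
      have hpq' : g p.1 p.2 = g q.1 q.2 := hpq
      have h1 := hge p.1 p.2
      have h2 := hge q.1 q.2
      apply Subtype.ext
      rw [← h1, ← h2, edge_firstDart, edge_firstDart, hpq']
  calc Es.card + 1 ≤ (S.erase r).card + 1 := by omega
    _ = S.card := Finset.card_erase_add_one hr

/-- Spanning-tree-corrected union bound: for any tree `T` on the (nonempty finite)
index set `V` and finite sets `A v`,
`|⋃ v A_v| ≤ Σ_v |A_v| - Σ_{uv ∈ E(T)} |A_u ∩ A_v|`. -/
theorem tree_union_bound {V W : Type*} [Fintype V] [DecidableEq V] [Nonempty V]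
    [DecidableEq W] (T : SimpleGraph V) [DecidableRel T.Adj]
    (hT : T.Connected) (hT' : T.IsAcyclic)
    (A : V → Finset W) :
    ((univ.biUnion A).card : ℤ)
      ≤ ∑ v : V, ((A v).card : ℤ)
        - ∑ e ∈ T.edgeFinset,
            Sym2.lift ⟨fun u v => (((A u) ∩ (A v)).card : ℤ),
              fun u v => by simp [inter_comm]⟩ e := by
  classical
  set U := univ.biUnion A with hU
  set Sw : W → Finset V := fun w => univ.filter (fun v => w ∈ A v) with hSw
  set Es : W → Finset (Sym2 V) :=
    fun w => T.edgeFinset.filter (fun e => ∀ x ∈ e, x ∈ Sw w) with hEsw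
  have hsub : ∀ v, A v ⊆ U := fun v => subset_biUnion_of_mem A (mem_univ v)
  have claim1 : ∑ v : V, ((A v).card : ℤ) = ∑ w ∈ U, ((Sw w).card : ℤ) := by
    have : ∀ v : V, ((A v).card : ℤ) = ∑ w ∈ U, (if w ∈ A v then 1 else 0) := by
      intro v
      rw [Finset.sum_boole, Finset.filter_mem_eq_inter, Finset.inter_eq_right.2 (hsub v)]
    rw [Finset.sum_congr rfl (fun v _ => this v), Finset.sum_comm]
    refine Finset.sum_congr rfl fun w _ => ?_
    rw [Finset.sum_boole]
  have claim2 : (∑ e ∈ T.edgeFinset,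
      Sym2.lift ⟨fun u v => (((A u) ∩ (A v)).card : ℤ),
        fun u v => by simp [inter_comm]⟩ e)
      = ∑ w ∈ U, ((Es w).card : ℤ) := by
    have hpt : ∀ e ∈ T.edgeFinset,
        Sym2.lift ⟨fun u v => (((A u) ∩ (A v)).card : ℤ),
          fun u v => by simp [inter_comm]⟩ e
        = ∑ w ∈ U, (if ∀ x ∈ e, x ∈ Sw w then (1 : ℤ) else 0) := by
      intro e _
      obtain ⟨⟨u, v⟩, rfl⟩ := e.exists_rep
      have h1 : Sym2.lift ⟨fun u v => (((A u) ∩ (A v)).card : ℤ),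
          fun u v => by simp [inter_comm]⟩ (s(u, v)) = ((A u ∩ A v).card : ℤ) := rfl
      rw [h1]
      have h2 : A u ∩ A v ⊆ U := subset_trans (Finset.inter_subset_left) (hsub u)
      rw [show ((A u ∩ A v).card : ℤ) = ∑ w ∈ U, (if w ∈ A u ∩ A v then 1 else 0) by
        rw [Finset.sum_boole, Finset.filter_mem_eq_inter, Finset.inter_eq_right.2 h2]]
      refine Finset.sum_congr rfl fun w _ => ?_
      have hiff : (w ∈ A u ∩ A v) ↔ (∀ x ∈ s(u, v), x ∈ Sw w) := by
        constructor
        · intro h x hx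
          rw [Sym2.mem_iff] at hx
          rcases Finset.mem_inter.1 h with ⟨h1', h2'⟩
          rcases hx with rfl | rfl <;> simp [hSw, *]
        · intro h
          refine Finset.mem_inter.2 ⟨?_, ?_⟩
          · have := h u (Sym2.mem_mk_left _ _); simpa [hSw] using this
          · have := h v (Sym2.mem_mk_right _ _); simpa [hSw] using this
      exact if_congr hiff rfl rfl
    rw [Finset.sum_congr rfl hpt, Finset.sum_comm]
    refine Finset.sum_congr rfl fun w _ => ?_
    rw [Finset.sum_boole]
  rw [claim1, claim2, ← Finset.sum_sub_distrib]
  have : ((U.card : ℤ)) = ∑ w ∈ U, (1 : ℤ) := by simp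
  rw [this]
  refine Finset.sum_le_sum fun w hw => ?_
  obtain ⟨v, _, hv⟩ := Finset.mem_biUnion.1 hw
  have hrS : v ∈ Sw w := by simp [hSw, hv]
  have h2 : (Es w).card + 1 ≤ (Sw w).card := tree_edges_in_set hT hT' (Sw w) hrS
  omega
end

section
/- For every graph G on n vertices, every k, and every tree T on vertex set V(G), d_k(G) ≥ C(n,k) − Σ_{v∈V(G)} C(n−|N[v]|, k) + Σ_{uv∈E(T)} C(n − |N[u] ∪ N[v]|, k). -/
/-!
A `k`-set fails to dominate iff it lies in some `A v`, the family of `k`-subsets of `V ∖ N[v]`,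
so the claim is Hunter's bound `|⋃ A v| ≤ Σ_v |A v| - Σ_{uv ∈ T} |A u ∩ A v|`. Root `T` at `r`
and let `p v` be the parent of `v ≠ r`. Following the path from `v` to `r`, an element of `A v`
lies in `A r` or in some `A w \ A (p w)` with `w ≠ r`, and `w ↦ {w, p w}` is a bijection from
the non-root vertices onto the edges of `T`; this gives
`|⋃ A v| ≤ |A r| + Σ_{w ≠ r} (|A w| - |A w ∩ A (p w)|)`.
-/

open Finset

theorem Finset.powersetCard_inter_powersetCard {α : Type*} [DecidableEq α] (k : ℕ)
    (s t : Finset α) : powersetCard k s ∩ powersetCard k t = powersetCard k (s ∩ t) := by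
  ext S
  simp only [mem_inter, mem_powersetCard, subset_inter_iff]
  tauto

theorem exists_ne_and_not_parent {ι : Type*} {P : ι → Prop} {d : ι → ℕ} {r : ι} {p : ι → ι}
    (hp : ∀ i ≠ r, d (p i) < d i) {i : ι} (hi : P i) (hr : ¬ P r) :
    ∃ j ≠ r, P j ∧ ¬ P (p j) := by
  induction hd : d i using Nat.strong_induction_on generalizing i with
  | _ n ih =>
    have hir : i ≠ r := fun h => hr (h ▸ hi)
    by_cases hpi : P (p i)
    · exact ih _ (hd ▸ hp i hir) hpi rfl
    · exact ⟨i, hir, hi, hpi⟩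

namespace SimpleGraph

variable {V : Type*} {T : SimpleGraph V}

theorem Connected.exists_adj_dist_lt (hT : T.Connected) {v r : V} (hvr : v ≠ r) :
    ∃ u, T.Adj v u ∧ T.dist u r < T.dist v r := by
  obtain ⟨p, hp⟩ := hT.exists_walk_length_eq_dist v r
  cases p with
  | nil => exact absurd rfl hvr
  | cons h q =>
    refine ⟨_, h, ?_⟩
    have := dist_le q
    rw [Walk.length_cons] at hp
    omega

variable [Fintype V] [DecidableEq V] [DecidableRel T.Adj]

theorem IsTree.sum_edgeFinset_eq_sum_erase {M : Type*} [AddCommMonoid M] (hT : T.IsTree)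
    {r : V} {p : V → V} (hadj : ∀ v ≠ r, T.Adj v (p v))
    (hdist : ∀ v ≠ r, T.dist (p v) r < T.dist v r) (f : Sym2 V → M) :
    ∑ e ∈ T.edgeFinset, f e = ∑ v ∈ univ.erase r, f s(v, p v) := by
  have hinj : Set.InjOn (fun v => s(v, p v)) (univ.erase r : Finset V) := by
    intro a ha b hb hab
    simp only [coe_erase, coe_univ, Set.mem_sdiff, Set.mem_univ, Set.mem_singleton_iff,
      true_and] at ha hb
    rcases Sym2.eq_iff.mp hab with ⟨h, _⟩ | ⟨hab, hba⟩
    · exact h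
    · have hpa := hdist a ha
      have hpb := hdist b hb
      rw [hba] at hpa
      rw [← hab] at hpb
      omega
  have himage : (univ.erase r).image (fun v => s(v, p v)) = T.edgeFinset := by
    refine eq_of_subset_of_card_le ?_ ?_
    · simp only [subset_iff, mem_image, mem_erase, mem_edgeFinset, forall_exists_index, and_imp]
      rintro _ v hvr - rfl
      exact hadj v hvr
    · have := hT.card_edgeFinset
      rw [card_image_of_injOn hinj, card_erase_of_mem (mem_univ r), card_univ]
      omega
  rw [← himage, sum_image hinj]

theorem IsTree.card_biUnion_le_sum_sub_sum_edgeFinset {α : Type*} [DecidableEq α]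
    (hT : T.IsTree) (A : V → Finset α) :
    ((univ.biUnion A).card : ℤ) ≤ ∑ v, ((A v).card : ℤ)
      - ∑ e ∈ T.edgeFinset,
          Sym2.lift ⟨fun u v => ((A u ∩ A v).card : ℤ), fun u v => by
            dsimp only; rw [inter_comm]⟩ e := by
  obtain ⟨r⟩ := hT.connected.nonempty
  have hparent : ∀ v, ∃ u, v ≠ r → T.Adj v u ∧ T.dist u r < T.dist v r := fun v =>
    if hvr : v = r then ⟨r, fun h => absurd hvr h⟩
    else (hT.connected.exists_adj_dist_lt hvr).imp fun _ hu _ => hu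
  choose p hp using hparent
  have hcover : univ.biUnion A ⊆ A r ∪ (univ.erase r).biUnion fun v => A v \ A (p v) := by
    intro x hx
    obtain ⟨i, -, hxi⟩ := mem_biUnion.mp hx
    by_cases hxr : x ∈ A r
    · exact mem_union_left _ hxr
    obtain ⟨j, hjr, hxj, hxpj⟩ :=
      exists_ne_and_not_parent (P := (x ∈ A ·)) (d := (T.dist · r)) (fun v hv => (hp v hv).2)
        hxi hxr
    exact mem_union_right _
      (mem_biUnion.mpr ⟨j, mem_erase.mpr ⟨hjr, mem_univ j⟩, mem_sdiff.mpr ⟨hxj, hxpj⟩⟩)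
  have hcard :
      (univ.biUnion A).card ≤ (A r).card + ∑ v ∈ univ.erase r, (A v \ A (p v)).card :=
    (card_le_card hcover).trans
      ((card_union_le _ _).trans (by gcongr; exact Finset.card_biUnion_le))
  have hsdiff (v : V) : ((A v \ A (p v)).card : ℤ) = (A v).card - (A v ∩ A (p v)).card := by
    rw [card_sdiff, inter_comm, Nat.cast_sub (card_le_card inter_subset_left)]
  rw [hT.sum_edgeFinset_eq_sum_erase (fun v hv => (hp v hv).1) (fun v hv => (hp v hv).2),
    ← add_sum_erase _ _ (mem_univ r)]
  simp only [Sym2.lift_mk]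
  zify at hcard
  rw [sum_congr rfl fun v _ => hsdiff v, sum_sub_distrib] at hcard
  linarith

end SimpleGraph

theorem domCount_add_card_biUnion {V : Type*} [Fintype V] [DecidableEq V] (G : SimpleGraph V)
    [DecidableRel G.Adj] (k : ℕ) :
    domCount G k + (univ.biUnion fun v => (closedNbhd G v)ᶜ.powersetCard k).card
      = (Fintype.card V).choose k := by
  have hbad : (univ.biUnion fun v => (closedNbhd G v)ᶜ.powersetCard k)
      = (univ.powersetCard k).filter
          (fun S : Finset V => ¬ ∀ v : V, ∃ u ∈ S, u ∈ closedNbhd G v) := by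
    ext S
    simp only [mem_biUnion, mem_univ, true_and, mem_powersetCard, subset_compl_iff_disjoint_right,
      disjoint_left, mem_filter, subset_univ, not_forall, not_exists, not_and, exists_and_right]
    exact and_comm
  rw [domCount, hbad, card_filter_add_card_filter_not, card_powersetCard, card_univ]

/-- Overlap-corrected union bound: for any tree `T` on the vertex set of `G`,
`d_k(G) ≥ C(n,k) - Σ_v C(n-|N[v]|,k) + Σ_{uv ∈ E(T)} C(n-|N[u] ∪ N[v]|,k)`. -/
theorem domCount_overlap_bound {V : Type*} [Fintype V] [DecidableEq V]
    (G : SimpleGraph V) [DecidableRel G.Adj] (k : ℕ)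
    (T : SimpleGraph V) [DecidableRel T.Adj] (hT : T.Connected) (hT' : T.IsAcyclic) :
    (domCount G k : ℤ)
      ≥ ((Fintype.card V).choose k : ℤ)
        - ∑ v : V, ((Fintype.card V - (closedNbhd G v).card).choose k : ℤ)
        + ∑ e ∈ T.edgeFinset,
            Sym2.lift ⟨fun u v =>
                (((Fintype.card V - (closedNbhd G u ∪ closedNbhd G v).card).choose k : ℕ) : ℤ),
              fun u v => by simp [union_comm]⟩ e := by
  set A : V → Finset (Finset V) := fun v => (closedNbhd G v)ᶜ.powersetCard k
  have hunion := SimpleGraph.IsTree.card_biUnion_le_sum_sub_sum_edgeFinset ⟨hT, hT'⟩ A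
  have hsplit : (domCount G k : ℤ) = (Fintype.card V).choose k - (univ.biUnion A).card := by
    rw [← domCount_add_card_biUnion G k]
    push_cast
    ring
  rw [ge_iff_le, hsplit, sub_add]
  convert sub_le_sub_left hunion ((Fintype.card V).choose k : ℤ) using 3
  · exact sum_congr rfl fun v _ => by simp only [A, card_powersetCard, card_compl]
  · refine sum_congr rfl ?_
    rintro ⟨u, v⟩ -
    simp only [A, Sym2.lift_mk, powersetCard_inter_powersetCard, ← compl_union,
      card_powersetCard, card_compl]
end

section
/- Let m ≥ 1 and let α_1 ≥ α_2 ≥ … ≥ α_m ≥ 1 and 0 ≤ β_1 < β_2 < … < β_m be integers satisfying α_{r+1} + β_{r+1} = α_r + β_r + 1 for all 1 ≤ r ≤ m−1. Then the coefficient sequence of the polynomial P(x) = Σ_{r=1}^m x^{α_r}(1+x)^{β_r} is log-concave with no internal zeros; in particular it is unimodal. -/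
/-!
Add the terms one at a time, carrying the invariant `StaircaseInv c a b` for the partial sum `c`,
where `X ^ a * (1 + X) ^ b` is the last term added. If `d` is the previous partial sum and `f` the new
term, the staircase condition (the new term starts no later and ends one degree later) lets the
ratio bounds of `d` and the exact ratios of the binomial row `f` yield the cross inequalities
`d k * f (k + 2) ≤ d (k + 1) * f (k + 1)` and `f k * c (k + 2) ≤ f (k + 1) * c (k + 1)`, which with
log-concavity of `d` give log-concavity of `c = d + f`. The domination of `d` by shifted binomial
rows is what keeps the upper ratio bound true for `c`. Unimodality follows because a log-concave
sequence without internal zeros never rises again after its first strict descent.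
-/

open Finset Polynomial

namespace Nat

theorem choose_le_choose_add_add (n j t : ℕ) : n.choose j ≤ (n + t).choose (j + t) := by
  induction t with
  | zero => rfl
  | succ t ih =>
    rw [← add_assoc, ← add_assoc, choose_succ_succ]
    exact ih.trans (le_add_right _ _)

theorem choose_le_choose_of_le_of_add_le {n y j J : ℕ} (hj : j ≤ J) (h : n + J ≤ y + j) :
    n.choose j ≤ y.choose J := by
  obtain ⟨t, rfl⟩ := exists_add_of_le hj
  exact (choose_le_choose_add_add n j t).trans (choose_le_choose _ (by omega))

theorem succ_mul_choose_le (s n j : ℕ) : (s + 1) * n.choose j ≤ (n + s + 2).choose (j + s) := by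
  induction s with
  | zero => simpa using choose_le_choose j (le_add_right n 2)
  | succ s ih =>
    calc (s + 2) * n.choose j = (s + 1) * n.choose j + n.choose j := by ring
      _ ≤ (n + s + 2).choose (j + s) + (n + s + 2).choose (j + s + 1) :=
        add_le_add ih (choose_le_choose_of_le_of_add_le (by omega) (by omega))
      _ = (n + (s + 1) + 2).choose (j + (s + 1)) := by rw [← choose_succ_succ]; rfl

theorem choose_mul_choose_add_two_le_sq (n j : ℕ) :
    n.choose j * n.choose (j + 2) ≤ n.choose (j + 1) ^ 2 := by
  have h₁ := choose_succ_right_eq n j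
  have h₂ := choose_succ_right_eq n (j + 1)
  have hsub : n - (j + 1) ≤ n - j := by omega
  refine le_of_mul_le_mul_right ?_ (show 0 < j + 2 by omega)
  calc n.choose j * n.choose (j + 2) * (j + 2)
      = n.choose j * (n - (j + 1)) * n.choose (j + 1) := by rw [mul_assoc, h₂]; ring
    _ ≤ n.choose j * (n - j) * n.choose (j + 1) := by gcongr
    _ = n.choose (j + 1) ^ 2 * (j + 1) := by rw [← h₁]; ring
    _ ≤ n.choose (j + 1) ^ 2 * (j + 2) := by gcongr; omega

end Nat

theorem mul_le_mul_of_cross_le {R : Type*} [CommRing R] [LinearOrder R] [IsStrictOrderedRing R]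
    {s t x x' y y' : R} (ht : 0 < t) (hx : 0 ≤ x) (hy : 0 ≤ y)
    (hy' : t * y' ≤ s * y) (hx' : s * x ≤ t * x') : x * y' ≤ x' * y := by
  refine le_of_mul_le_mul_left ?_ ht
  calc t * (x * y') = x * (t * y') := by ring
    _ ≤ x * (s * y) := mul_le_mul_of_nonneg_left hy' hx
    _ = y * (s * x) := by ring
    _ ≤ y * (t * x') := mul_le_mul_of_nonneg_left hx' hy
    _ = t * (x' * y) := by ring

def LogConcave (f : ℕ → ℕ) : Prop := ∀ k, f k * f (k + 2) ≤ f (k + 1) ^ 2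

def NoInternalZeros (f : ℕ → ℕ) : Prop :=
  ∀ i j k, i ≤ j → j ≤ k → f i ≠ 0 → f k ≠ 0 → f j ≠ 0

namespace LogConcave

variable {f : ℕ → ℕ}

theorem succ_le_of_succ_lt (hf : LogConcave f) (hz : NoInternalZeros f) {t : ℕ}
    (ht : f (t + 1) < f t) : ∀ n ≥ t, f (n + 1) ≤ f n := by
  suffices h : ∀ n ≥ t, f (n + 1) < f n ∨ f (n + 1) = 0 by
    intro n hn
    rcases h n hn with h | h <;> omega
  intro n hn
  induction n, hn using Nat.le_induction with
  | base => exact Or.inl ht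
  | succ n hn ih =>
    by_cases h₀ : f (n + 2) = 0
    · exact Or.inr h₀
    have h₁ : f (n + 1) ≠ 0 := hz t (n + 1) (n + 2) (by omega) (by omega) (by omega) h₀
    have h₂ : f (n + 1) < f n := by omega
    left
    refine lt_of_mul_lt_mul_left ?_ (Nat.zero_le (f n))
    calc f n * f (n + 2) ≤ f (n + 1) ^ 2 := hf n
      _ < f n * f (n + 1) := by rw [sq]; exact Nat.mul_lt_mul_of_pos_right h₂ (by omega)

theorem exists_monotoneOn_antitoneOn (hf : LogConcave f) (hz : NoInternalZeros f) {N : ℕ}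
    (hN : ∀ k, N < k → f k = 0) :
    ∃ k₀, MonotoneOn f (Set.Iic k₀) ∧ AntitoneOn f (Set.Ici k₀) := by
  classical
  have hex : ∃ t, ∀ n ≥ t, f (n + 1) ≤ f n :=
    ⟨N + 1, fun n hn => by rw [hN (n + 1) (by omega)]; omega⟩
  refine ⟨Nat.find hex, monotoneOn_of_le_succ Set.ordConnected_Iic fun n _ _ hn => ?_,
    antitoneOn_nat_Ici_of_succ_le (Nat.find_spec hex)⟩
  rw [Order.succ_eq_add_one] at hn ⊢
  by_contra! hlt
  exact Nat.find_min hex (show n < Nat.find hex from hn) (hf.succ_le_of_succ_lt hz hlt)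

end LogConcave

def shiftedChoose (a b k : ℕ) : ℕ := if a ≤ k then b.choose (k - a) else 0

theorem coeff_X_pow_mul_one_add_X_pow (a b k : ℕ) :
    ((X : ℕ[X]) ^ a * (1 + X) ^ b).coeff k = shiftedChoose a b k := by
  rw [coeff_X_pow_mul', coeff_one_add_X_pow, Nat.cast_id, shiftedChoose]

theorem coeff_sum_X_pow_mul_one_add_X_pow {ι : Type*} (s : Finset ι) (α β : ι → ℕ) :
    (∑ r ∈ s, (X : ℕ[X]) ^ α r * (1 + X) ^ β r).coeff = ∑ r ∈ s, shiftedChoose (α r) (β r) := by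
  ext k
  simp only [finsetSum_coeff, Finset.sum_apply, coeff_X_pow_mul_one_add_X_pow]

namespace shiftedChoose

theorem eq_zero_of_lt {a b k : ℕ} (h : k < a) : shiftedChoose a b k = 0 :=
  if_neg (by omega)

theorem eq_zero_of_add_lt {a b k : ℕ} (h : a + b < k) : shiftedChoose a b k = 0 := by
  unfold shiftedChoose
  split_ifs
  · exact Nat.choose_eq_zero_of_lt (by omega)
  · rfl

theorem pos {a b k : ℕ} (h₁ : a ≤ k) (h₂ : k ≤ a + b) : 0 < shiftedChoose a b k := by
  rw [shiftedChoose, if_pos h₁]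
  exact Nat.choose_pos (by omega)

theorem add_succ (a b k : ℕ) :
    shiftedChoose a b k + shiftedChoose a b (k + 1) = shiftedChoose a (b + 1) (k + 1) := by
  by_cases h : a ≤ k
  · obtain ⟨j, rfl⟩ := exists_add_of_le h
    simp only [shiftedChoose, if_pos (by omega : a ≤ a + j), if_pos (by omega : a ≤ a + j + 1),
      show a + j + 1 - a = j + 1 by omega, Nat.add_sub_cancel_left, Nat.choose_succ_succ]
  rw [eq_zero_of_lt (not_le.mp h), zero_add]
  rcases Nat.lt_or_ge (k + 1) a with h' | h'
  · rw [eq_zero_of_lt h', eq_zero_of_lt h']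
  · simp [shiftedChoose, show k + 1 = a by omega]

theorem le_add {a b x y k s : ℕ} (hx : x ≤ a + s) (hy : a + b + s ≤ x + y) :
    shiftedChoose a b k ≤ shiftedChoose x y (k + s) := by
  by_cases h : a ≤ k
  · rw [shiftedChoose, shiftedChoose, if_pos h, if_pos (by omega)]
    exact Nat.choose_le_choose_of_le_of_add_le (by omega) (by omega)
  · simp [eq_zero_of_lt (not_le.mp h)]

theorem logConcave (a b k : ℕ) :
    shiftedChoose a b k * shiftedChoose a b (k + 2) ≤ shiftedChoose a b (k + 1) ^ 2 := by
  by_cases h : a ≤ k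
  · obtain ⟨j, rfl⟩ := exists_add_of_le h
    simp only [shiftedChoose, if_pos (by omega : a ≤ a + j), if_pos (by omega : a ≤ a + j + 1),
      if_pos (by omega : a ≤ a + j + 2), show a + j + 1 - a = j + 1 by omega,
      show a + j + 2 - a = j + 2 by omega, Nat.add_sub_cancel_left]
    exact Nat.choose_mul_choose_add_two_le_sq b j
  · simp [eq_zero_of_lt (not_le.mp h)]

theorem succ_sub_mul_succ (a b k : ℕ) :
    ((k : ℤ) + 1 - a) * shiftedChoose a b (k + 1) = ((a : ℤ) + b - k) * shiftedChoose a b k := by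
  by_cases h : a ≤ k
  · obtain ⟨j, rfl⟩ := exists_add_of_le h
    simp only [shiftedChoose, if_pos (by omega : a ≤ a + j), if_pos (by omega : a ≤ a + j + 1),
      show a + j + 1 - a = j + 1 by omega, Nat.add_sub_cancel_left]
    rcases Nat.lt_or_ge b j with hj | hj
    · simp [Nat.choose_eq_zero_of_lt hj, Nat.choose_eq_zero_of_lt (hj.trans (lt_add_one j))]
    · have := Nat.choose_succ_right_eq b j
      zify [hj] at this
      push_cast
      linear_combination this
  rw [eq_zero_of_lt (not_le.mp h)]
  rcases Nat.lt_or_ge (k + 1) a with h' | h'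
  · simp [eq_zero_of_lt h']
  · simp [show (k : ℤ) + 1 - a = 0 by omega]

theorem mul_le_succ (e a n k : ℕ) :
    e * shiftedChoose (a + e) n (k + 1) ≤ shiftedChoose a (n + e + 1) k := by
  rcases e with _ | s
  · simp
  by_cases h : a + s ≤ k
  · obtain ⟨j, rfl⟩ := exists_add_of_le h
    simp only [shiftedChoose, if_pos (by omega : a + (s + 1) ≤ a + s + j + 1),
      if_pos (by omega : a ≤ a + s + j), show a + s + j + 1 - (a + (s + 1)) = j by omega,
      show a + s + j - a = j + s by omega, show n + (s + 1) + 1 = n + s + 2 by omega]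
    exact Nat.succ_mul_choose_le s n j
  · simp [eq_zero_of_lt (show k + 1 < a + (s + 1) by omega)]

theorem mul_le_mul_of_ratio_le {c : ℕ → ℕ} {a b : ℕ}
    (hc : ∀ k : ℕ, ((k : ℤ) - a) * c (k + 1) ≤ ((a : ℤ) + b + 1 - k) * c k) (k : ℕ) :
    shiftedChoose a b k * c (k + 2) ≤ shiftedChoose a b (k + 1) * c (k + 1) := by
  by_cases h : a ≤ k
  · have := hc (k + 1)
    push_cast at this
    exact_mod_cast mul_le_mul_of_cross_le (s := (a : ℤ) + b - k) (t := (k : ℤ) + 1 - a)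
      (x := shiftedChoose a b k) (x' := shiftedChoose a b (k + 1))
      (y := c (k + 1)) (y' := c (k + 2)) (by omega) (by positivity) (by positivity)
      (by linarith) (succ_sub_mul_succ a b k).ge
  · simp [eq_zero_of_lt (not_le.mp h)]

end shiftedChoose

/-- `ratio_le` and `ratio_ge` say that, where `c k ≠ 0`, the ratio `c (k + 1) / c k` lies between
the corresponding ratios of `X ^ (a - 1) * (1 + X) ^ (b + 1)` and `X ^ (a + 1) * (1 + X) ^ b`. -/
structure StaircaseInv (c : ℕ → ℕ) (a b : ℕ) : Prop where
  shiftedChoose_le : shiftedChoose a b ≤ c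
  eq_zero_of_lt : ∀ k < a, c k = 0
  logConcave : LogConcave c
  ratio_le : ∀ k : ℕ, ((k : ℤ) - a) * c (k + 1) ≤ ((a : ℤ) + b + 1 - k) * c k
  ratio_ge : ∀ k : ℕ, ((a : ℤ) + b - k) * c k ≤ ((k : ℤ) + 2 - a) * c (k + 1)
  le_shiftedChoose : ∀ x y, x ≤ a → a + b + 1 ≤ x + y → ∀ k, c k ≤ shiftedChoose x y (k + 1)

namespace StaircaseInv

theorem of_shiftedChoose (a b : ℕ) : StaircaseInv (shiftedChoose a b) a b where
  shiftedChoose_le := le_rfl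
  eq_zero_of_lt _ := shiftedChoose.eq_zero_of_lt
  logConcave := shiftedChoose.logConcave a b
  ratio_le k := by have := shiftedChoose.succ_sub_mul_succ a b k; nlinarith
  ratio_ge k := by have := shiftedChoose.succ_sub_mul_succ a b k; nlinarith
  le_shiftedChoose _ _ hx hy k := shiftedChoose.le_add (by omega) (by omega)

variable {c : ℕ → ℕ} {a b : ℕ}

theorem eq_zero_of_add_lt (hc : StaircaseInv c a b) {k : ℕ} (hk : a + b < k) : c k = 0 :=
  Nat.eq_zero_of_le_zero <| (hc.le_shiftedChoose a (b + 1) le_rfl (by omega) k).trans_eq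
    (shiftedChoose.eq_zero_of_add_lt (by omega))

theorem noInternalZeros (hc : StaircaseInv c a b) : NoInternalZeros c := by
  intro i j k hij hjk hi hk
  have hai : a ≤ i := by by_contra! h; exact hi (hc.eq_zero_of_lt i h)
  have hkb : k ≤ a + b := by by_contra! h; exact hk (hc.eq_zero_of_add_lt h)
  exact (shiftedChoose.pos (hai.trans hij) (hjk.trans hkb)).trans_le (hc.shiftedChoose_le j) |>.ne'

section Step

variable {d : ℕ → ℕ} {e : ℕ} (hd : StaircaseInv d (a + e) b)
include hd

theorem mul_le_add_shiftedChoose (k : ℕ) :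
    e * d (k + 1) ≤ shiftedChoose a (b + e + 1) k + shiftedChoose a (b + e + 1) (k + 1) := by
  rw [shiftedChoose.add_succ]
  calc e * d (k + 1) ≤ e * shiftedChoose (a + e) (b + 1) (k + 1 + 1) :=
        Nat.mul_le_mul_left e (hd.le_shiftedChoose _ _ le_rfl le_rfl _)
    _ ≤ shiftedChoose a (b + 1 + e + 1) (k + 1) := shiftedChoose.mul_le_succ e a (b + 1) (k + 1)
    _ = shiftedChoose a (b + e + 1 + 1) (k + 1) := by rw [add_right_comm b 1 e]

theorem ratio_le_add (k : ℕ) :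
    ((k : ℤ) - a) * (d + shiftedChoose a (b + e + 1)) (k + 1) ≤
      ((a : ℤ) + (b + e + 1 : ℕ) + 1 - k) * (d + shiftedChoose a (b + e + 1)) k := by
  have hrow := shiftedChoose.succ_sub_mul_succ a (b + e + 1) k
  have hdk := hd.ratio_le k
  have hmul : (e : ℤ) * d (k + 1) ≤ shiftedChoose a (b + e + 1) k +
      shiftedChoose a (b + e + 1) (k + 1) := by exact_mod_cast hd.mul_le_add_shiftedChoose k
  have : (0 : ℤ) ≤ d k := by positivity
  simp only [Pi.add_apply]
  push_cast at hrow hdk ⊢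
  linarith

theorem ratio_ge_add (k : ℕ) :
    ((a : ℤ) + (b + e + 1 : ℕ) - k) * (d + shiftedChoose a (b + e + 1)) k ≤
      ((k : ℤ) + 2 - a) * (d + shiftedChoose a (b + e + 1)) (k + 1) := by
  have hrow := shiftedChoose.succ_sub_mul_succ a (b + e + 1) k
  have hdk := hd.ratio_ge k
  have hle : (d k : ℤ) ≤ shiftedChoose a (b + e + 1) (k + 1) := by
    exact_mod_cast hd.le_shiftedChoose a (b + e + 1) (by omega) (by omega) k
  have : (0 : ℤ) ≤ e * d (k + 1) := by positivity
  simp only [Pi.add_apply]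
  push_cast at hrow hdk ⊢
  linarith

theorem mul_shiftedChoose_le (k : ℕ) :
    d k * shiftedChoose a (b + e + 1) (k + 2) ≤ d (k + 1) * shiftedChoose a (b + e + 1) (k + 1) := by
  by_cases h : a ≤ k + 1
  · have hdk := hd.ratio_ge k
    have : (0 : ℤ) ≤ e * d (k + 1) := by positivity
    push_cast at hdk
    exact_mod_cast mul_le_mul_of_cross_le (s := (a : ℤ) + b + e - k) (t := (k : ℤ) + 2 - a)
      (x := d k) (x' := d (k + 1)) (y := shiftedChoose a (b + e + 1) (k + 1))
      (y' := shiftedChoose a (b + e + 1) (k + 2)) (by omega) (by positivity) (by positivity)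
      (by have := shiftedChoose.succ_sub_mul_succ a (b + e + 1) (k + 1); push_cast at this; linarith)
      (by linarith)
  · simp [hd.eq_zero_of_lt k (by omega)]

theorem logConcave_add : LogConcave (d + shiftedChoose a (b + e + 1)) := by
  intro k
  set f := shiftedChoose a (b + e + 1)
  have hfc := shiftedChoose.mul_le_mul_of_ratio_le hd.ratio_le_add k
  simp only [Pi.add_apply] at hfc ⊢
  calc (d k + f k) * (d (k + 2) + f (k + 2))
      = d k * d (k + 2) + d k * f (k + 2) + f k * (d (k + 2) + f (k + 2)) := by ring
    _ ≤ d (k + 1) ^ 2 + d (k + 1) * f (k + 1) + f (k + 1) * (d (k + 1) + f (k + 1)) :=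
      add_le_add (add_le_add (hd.logConcave k) (hd.mul_shiftedChoose_le k)) hfc
    _ = (d (k + 1) + f (k + 1)) ^ 2 := by ring

theorem add_shiftedChoose :
    StaircaseInv (d + shiftedChoose a (b + e + 1)) a (b + e + 1) where
  shiftedChoose_le k := Nat.le_add_left _ _
  eq_zero_of_lt k hk := by
    simp [hd.eq_zero_of_lt k (by omega), shiftedChoose.eq_zero_of_lt hk]
  logConcave := hd.logConcave_add
  ratio_le := hd.ratio_le_add
  ratio_ge := hd.ratio_ge_add
  le_shiftedChoose x y hx hy k := by
    obtain ⟨y, rfl⟩ : ∃ y', y = y' + 1 := ⟨y - 1, by omega⟩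
    rw [Pi.add_apply, ← shiftedChoose.add_succ, add_comm]
    exact add_le_add (shiftedChoose.le_add (s := 0) (by omega) (by omega))
      (hd.le_shiftedChoose x y (by omega) (by omega) k)

end Step

end StaircaseInv

theorem staircaseInv_sum {m : ℕ} {α β : ℕ → ℕ} (hα : ∀ r, 1 ≤ r → r < m → α (r + 1) ≤ α r)
    (hstair : ∀ r, 1 ≤ r → r < m → α (r + 1) + β (r + 1) = α r + β r + 1) {n : ℕ}
    (hn : 1 ≤ n) (hnm : n ≤ m) :
    StaircaseInv (∑ r ∈ Icc 1 n, shiftedChoose (α r) (β r)) (α n) (β n) := by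
  induction n, hn using Nat.le_induction with
  | base => simpa using StaircaseInv.of_shiftedChoose (α 1) (β 1)
  | succ n hn ih =>
    obtain ⟨e, he⟩ := exists_add_of_le (hα n hn hnm)
    have hβ : β (n + 1) = β n + e + 1 := by have := hstair n hn hnm; omega
    rw [sum_Icc_succ_top (by omega), hβ]
    exact (he ▸ ih (by omega)).add_shiftedChoose

theorem staircase_logConcave_general (m : ℕ) (hm : 1 ≤ m) (α β : ℕ → ℕ)
    (hα : ∀ r, 1 ≤ r → r < m → α (r + 1) ≤ α r)
    (hstair : ∀ r, 1 ≤ r → r < m → α (r + 1) + β (r + 1) = α r + β r + 1) :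
    letI P : Polynomial ℕ := ∑ r ∈ Finset.Icc 1 m, X ^ (α r) * (1 + X) ^ (β r)
    (∀ k : ℕ, 1 ≤ k → P.coeff (k - 1) * P.coeff (k + 1) ≤ (P.coeff k) ^ 2)
    ∧ (∀ i j k : ℕ, i ≤ j → j ≤ k → P.coeff i ≠ 0 → P.coeff k ≠ 0 → P.coeff j ≠ 0)
    ∧ ∃ k₀ : ℕ, (∀ i j : ℕ, i ≤ j → j ≤ k₀ → P.coeff i ≤ P.coeff j)
        ∧ (∀ i j : ℕ, k₀ ≤ i → i ≤ j → P.coeff j ≤ P.coeff i) := by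
  have hinv := staircaseInv_sum hα hstair hm le_rfl
  rw [coeff_sum_X_pow_mul_one_add_X_pow]
  obtain ⟨k₀, hmono, hanti⟩ := hinv.logConcave.exists_monotoneOn_antitoneOn hinv.noInternalZeros
    fun _ => hinv.eq_zero_of_add_lt
  refine ⟨fun k hk => ?_, hinv.noInternalZeros, k₀,
    fun i j hij hj => hmono (hij.trans hj) hj hij, fun i j hi hij => hanti hi (hi.trans hij) hij⟩
  obtain ⟨k, rfl⟩ := exists_add_of_le hk
  simpa [add_comm 1 k, add_assoc] using hinv.logConcave k

/-- Staircase lemma: if `α_1 ≥ … ≥ α_m ≥ 1`, `β_1 < … < β_m`, and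
`α_{r+1} + β_{r+1} = α_r + β_r + 1` for `1 ≤ r ≤ m-1`, then the coefficient
sequence of `P(x) = Σ_r x^{α_r}(1+x)^{β_r}` is log-concave, has no internal
zeros, and in particular is unimodal. -/
theorem staircase_logConcave (m : ℕ) (hm : 1 ≤ m) (α β : ℕ → ℕ)
    (hα : ∀ r, 1 ≤ r → r < m → α (r + 1) ≤ α r)
    (hα1 : 1 ≤ α m)
    (hβ : ∀ r, 1 ≤ r → r < m → β r < β (r + 1))
    (hstair : ∀ r, 1 ≤ r → r < m → α (r + 1) + β (r + 1) = α r + β r + 1) :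
    letI P : Polynomial ℕ := ∑ r ∈ Finset.Icc 1 m, X ^ (α r) * (1 + X) ^ (β r)
    (∀ k : ℕ, 1 ≤ k → P.coeff (k - 1) * P.coeff (k + 1) ≤ (P.coeff k) ^ 2)
    ∧ (∀ i j k : ℕ, i ≤ j → j ≤ k → P.coeff i ≠ 0 → P.coeff k ≠ 0 → P.coeff j ≠ 0)
    ∧ ∃ k₀ : ℕ, (∀ i j : ℕ, i ≤ j → j ≤ k₀ → P.coeff i ≤ P.coeff j)
        ∧ (∀ i j : ℕ, k₀ ≤ i → i ≤ j → P.coeff j ≤ P.coeff i) :=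
  staircase_logConcave_general m hm α β hα hstair
end

section
/- Let T be a threshold graph with threshold ordering v_1,…,v_n, dominating-side vertices c_1,…,c_m (in order), I the set of isolated-side vertices, I_r the isolated-side vertices after c_r, and P_r the vertices before c_r. Then every dominating set S containing at least one c_r equals U ∪ {c_r} ∪ I_r for the unique largest index r with c_r ∈ S and some U ⊆ P_r; conversely, every set of this form is dominating. Moreover, a dominating set containing no c_r exists iff some isolated-side vertex precedes c_1, in which case it is uniquely I. -/
/-!
In a threshold ordering a vertex `u` is seen by an isolated-side vertex `j` only if `u = j` or `u`
is a later dominating-side vertex, while a dominating-side vertex is seen by every earlier vertex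
and by every dominating-side vertex. Hence an isolated-side vertex with no later dominating-side
vertex in a dominating set `S` must itself lie in `S`, whereas a single dominating-side vertex `r`
dominates everything except the isolated-side vertices after it. Taking `r` to be the last
dominating-side vertex of `S` gives the decomposition; if `S` avoids the dominating side, it must
be the whole isolated side, and it dominates `c₁` exactly when some isolated-side vertex precedes
`c₁`.
-/

open Finset

section closedNbhd

variable {V : Type*} [Fintype V] [DecidableEq V] (G : SimpleGraph V) [DecidableRel G.Adj]

def IsDominatingSet (S : Finset V) : Prop :=
  ∀ v, ∃ u ∈ S, u ∈ closedNbhd G v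

variable {G}

lemma mem_closedNbhd {u v : V} : u ∈ closedNbhd G v ↔ u = v ∨ G.Adj v u := by
  simp [closedNbhd]

lemma self_mem_closedNbhd {v : V} : v ∈ closedNbhd G v :=
  mem_insert_self v _

end closedNbhd

/-- `side j = true` records that `j` was added as a dominating vertex, `false` as an isolated one. -/
def IsThresholdOrder {V : Type*} [LinearOrder V] (G : SimpleGraph V) (side : V → Bool) : Prop :=
  ∀ i j : V, i < j → (G.Adj i j ↔ side j = true)

namespace IsThresholdOrder

variable {V : Type*} [LinearOrder V] {G : SimpleGraph V} {side : V → Bool}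

lemma adj_iff (h : IsThresholdOrder G side) {u v : V} :
    G.Adj u v ↔ u < v ∧ side v = true ∨ v < u ∧ side u = true := by
  rcases lt_trichotomy u v with huv | rfl | hvu
  · simp [h u v huv, huv, huv.not_gt]
  · simp
  · simp [G.adj_comm u v, h v u hvu, hvu, hvu.not_gt]

variable [Fintype V] [DecidableRel G.Adj]

lemma mem_closedNbhd_of_side_eq_false (h : IsThresholdOrder G side) {u j : V}
    (hj : side j = false) : u ∈ closedNbhd G j ↔ u = j ∨ j < u ∧ side u = true := by
  simp [mem_closedNbhd, h.adj_iff, hj]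

lemma mem_closedNbhd_of_side_eq_true (h : IsThresholdOrder G side) {u v : V}
    (hv : side v = true) : u ∈ closedNbhd G v ↔ u ≤ v ∨ side u = true := by
  rw [mem_closedNbhd, h.adj_iff, le_iff_lt_or_eq]
  rcases lt_trichotomy u v with huv | rfl | hvu
  · simp [huv, hv]
  · simp
  · simp [hvu, hvu.ne', hvu.not_gt]

lemma mem_closedNbhd_of_side_eq_true_left (h : IsThresholdOrder G side) {r v : V}
    (hr : side r = true) : r ∈ closedNbhd G v ↔ v ≤ r ∨ side v = true := by
  cases hv : side v
  · rw [h.mem_closedNbhd_of_side_eq_false hv, le_iff_lt_or_eq]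
    simp only [hr, and_true, eq_comm (a := r), Bool.false_eq_true, or_false]
    exact or_comm
  · simp [h.mem_closedNbhd_of_side_eq_true hv, hr]

lemma mem_of_isDominatingSet (h : IsThresholdOrder G side) {S : Finset V}
    (hS : IsDominatingSet G S) {j : V} (hj : side j = false)
    (hlast : ∀ u ∈ S, side u = true → u ≤ j) : j ∈ S := by
  obtain ⟨u, huS, hu⟩ := hS j
  rcases (h.mem_closedNbhd_of_side_eq_false hj).1 hu with rfl | ⟨hju, hu⟩
  · exact huS
  · exact absurd (hlast u huS hu) hju.not_ge

lemma isDominatingSet_of_mem (h : IsThresholdOrder G side) {S : Finset V} {r : V}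
    (hrS : r ∈ S) (hr : side r = true) (hafter : ∀ j, side j = false → r < j → j ∈ S) :
    IsDominatingSet G S := by
  intro v
  by_cases hv : side v = false ∧ r < v
  · exact ⟨v, hafter v hv.1 hv.2, self_mem_closedNbhd⟩
  · refine ⟨r, hrS, (h.mem_closedNbhd_of_side_eq_true_left hr).2 ?_⟩
    cases hside : side v <;> simp_all [le_of_not_gt]

lemma eq_union_of_isDominatingSet (h : IsThresholdOrder G side) {S : Finset V}
    (hS : IsDominatingSet G S) {r : V} (hrS : r ∈ S)
    (hlast : ∀ r' ∈ S, side r' = true → r' ≤ r) :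
    S = S.filter (· < r) ∪ {r} ∪ univ.filter (fun j => side j = false ∧ r < j) := by
  ext x
  simp only [mem_union, mem_filter, mem_singleton, mem_univ, true_and]
  constructor
  · intro hx
    rcases lt_trichotomy x r with hxr | rfl | hrx
    · exact .inl (.inl ⟨hx, hxr⟩)
    · exact .inl (.inr rfl)
    · refine .inr ⟨?_, hrx⟩
      by_contra hside
      exact (hlast x hx (by simpa using hside)).not_gt hrx
  · rintro ((⟨hx, -⟩ | rfl) | ⟨hx, hrx⟩)
    · exact hx
    · exact hrS
    · exact h.mem_of_isDominatingSet hS hx fun u hu hu' => (hlast u hu hu').trans hrx.le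

lemma exists_lt_of_isDominatingSet (h : IsThresholdOrder G side) {S : Finset V}
    (hS : IsDominatingSet G S) (hS_side : ∀ u ∈ S, side u = false) {c : V}
    (hc : side c = true) : ∃ j, side j = false ∧ j < c := by
  obtain ⟨u, huS, hu⟩ := hS c
  have hu_side := hS_side u huS
  rcases (h.mem_closedNbhd_of_side_eq_true hc).1 hu with huc | hu_true
  · exact ⟨u, hu_side, huc.lt_of_ne fun huc => by simp_all⟩
  · simp_all

lemma eq_filter_of_isDominatingSet (h : IsThresholdOrder G side) {S : Finset V}
    (hS : IsDominatingSet G S) (hS_side : ∀ u ∈ S, side u = false) :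
    S = univ.filter (fun j => side j = false) := by
  ext j
  simp only [mem_filter, mem_univ, true_and]
  refine ⟨hS_side j, fun hj => h.mem_of_isDominatingSet hS hj fun u hu hu' => ?_⟩
  simp [hS_side u hu] at hu'

lemma isDominatingSet_filter_side_eq_false (h : IsThresholdOrder G side) {j : V}
    (hj : side j = false) (hbefore : ∀ v, side v = true → j ≤ v) :
    IsDominatingSet G (univ.filter (fun x => side x = false)) := by
  intro v
  cases hv : side v
  · exact ⟨v, by simp [hv], self_mem_closedNbhd⟩
  · exact ⟨j, by simp [hj], (h.mem_closedNbhd_of_side_eq_true hv).2 (.inl (hbefore v hv))⟩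

end IsThresholdOrder

/-- Decomposition of dominating sets of a threshold graph. The graph `G` on
`Fin n` has a threshold ordering recorded by `side` (`side j = true` means `v_j`
was added as a dominating vertex, adjacent to all earlier vertices). Every
dominating set containing a dominating-side vertex is `U ∪ {r} ∪ I_r` for its
last dominating-side vertex `r` and some `U ⊆ P_r`, and conversely every such
set is dominating. A dominating set avoiding the dominating side exists iff some
isolated-side vertex precedes the first dominating-side vertex `c₁`, in which
case it is uniquely the whole isolated side `I`. -/
theorem threshold_dominating_decomposition {n : ℕ} (G : SimpleGraph (Fin n))
    [DecidableRel G.Adj] (side : Fin n → Bool)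
    (hside : ∀ i j : Fin n, i < j → (G.Adj i j ↔ side j = true)) :
    (∀ S : Finset (Fin n), (∀ v : Fin n, ∃ u ∈ S, u ∈ closedNbhd G v) →
      (∃ r ∈ S, side r = true) →
      ∃ r ∈ S, side r = true ∧ (∀ r' ∈ S, side r' = true → r' ≤ r) ∧
        ∃ U ⊆ univ.filter (fun j : Fin n => j < r),
          S = U ∪ {r} ∪ univ.filter (fun j : Fin n => side j = false ∧ r < j))
    ∧ (∀ r : Fin n, side r = true → ∀ U ⊆ univ.filter (fun j : Fin n => j < r),
        ∀ v : Fin n, ∃ u ∈ U ∪ {r} ∪ univ.filter (fun j : Fin n => side j = false ∧ r < j),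
          u ∈ closedNbhd G v)
    ∧ ∀ c₁ : Fin n, side c₁ = true → (∀ j : Fin n, side j = true → c₁ ≤ j) →
        ((∃ S : Finset (Fin n), (∀ v : Fin n, ∃ u ∈ S, u ∈ closedNbhd G v) ∧
            ∀ r ∈ S, side r = false) ↔ ∃ j : Fin n, side j = false ∧ j < c₁)
        ∧ ∀ S : Finset (Fin n), (∀ v : Fin n, ∃ u ∈ S, u ∈ closedNbhd G v) →
            (∀ r ∈ S, side r = false) →
            S = univ.filter (fun j : Fin n => side j = false) := by
  have h : IsThresholdOrder G side := hside
  refine ⟨fun S hS ⟨r₀, hr₀S, hr₀⟩ => ?_, fun r hr U _ => ?_, fun c₁ hc₁ hfirst => ⟨⟨?_, ?_⟩, ?_⟩⟩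
  · obtain ⟨r, hr, hlast⟩ := (S.filter (side · = true)).exists_max_image id ⟨r₀, by simp [hr₀S, hr₀]⟩
    rw [mem_filter] at hr
    have hlast' : ∀ r' ∈ S, side r' = true → r' ≤ r := fun r' hr' hr'_side =>
      hlast r' (mem_filter.2 ⟨hr', hr'_side⟩)
    exact ⟨r, hr.1, hr.2, hlast', S.filter (· < r), filter_subset_filter _ (subset_univ S),
      h.eq_union_of_isDominatingSet hS hr.1 hlast'⟩
  · exact h.isDominatingSet_of_mem (by simp) hr fun j hj hrj => by simp [hj, hrj]
  · rintro ⟨S, hS, hS_side⟩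
    exact h.exists_lt_of_isDominatingSet hS hS_side hc₁
  · rintro ⟨j, hj, hjc⟩
    exact ⟨_, h.isDominatingSet_filter_side_eq_false hj fun v hv => hjc.le.trans (hfirst v hv),
      fun r hr => (mem_filter.1 hr).2⟩
  · exact fun S hS hS_side => h.eq_filter_of_isDominatingSet hS hS_side
end
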